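/- Let (b, w) be a bid on n goods, p ∈ ℝ^n a price vector, I the set of goods demanded by (b,w) at p, and b' the projection of b with respect to p. If I = {0,1,…,n} (the bid demands all goods) then b' = b. Otherwise, the set of goods demanded by (b', w) at p is again I, and the surplus gap of (b', w) at p equals the surplus gap of (b, w) at p plus 1. -/

import Mathlib

open Finset

noncomputable section

variable {n : ℕ}

/-- Extend a value/price vector in `ℝ^n` by a 0-th coordinate (the reject good) equal to 0. -/
def extVec (b : Fin n → ℝ) : Fin (n + 1) → ℝ := Fin.cons 0 b

/-- Surplus of good `i` (in `{0,…,n}`) for value vector `b` at price `p`. -/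
def surplus (b p : Fin n → ℝ) (i : Fin (n + 1)) : ℝ := extVec b i - extVec p i

/-- Maximal surplus over all goods (including the reject good). -/
def maxSurplus (b p : Fin n → ℝ) : ℝ :=
  Finset.univ.sup' Finset.univ_nonempty (surplus b p)

/-- The bid with value vector `b` demands good `i` at price `p`. -/
def Demands (b p : Fin n → ℝ) (i : Fin (n + 1)) : Prop :=
  ∀ j, surplus b p j ≤ surplus b p i

open Classical in
/-- The set of goods demanded by value vector `b` at price `p`. -/
def demandedSet (b p : Fin n → ℝ) : Finset (Fin (n + 1)) :=
  Finset.univ.filter fun i => Demands b p i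

/-- Indirect utility function of a bid list (bids are pairs of value vector and weight). -/
def indirectUtility (B : List ((Fin n → ℝ) × ℝ)) (p : Fin n → ℝ) : ℝ :=
  (B.map fun bw => bw.2 * maxSurplus bw.1 p).sum

/-- Surplus gap of the bid `b` at `p`: maximal surplus minus the best surplus on
a non-demanded good (junk value when every good is demanded). -/
def surplusGap (b p : Fin n → ℝ) : ℝ :=
  maxSurplus b p - sSup (surplus b p '' {i | i ∉ demandedSet b p})

/-- `B` is `ε`-valid at `p` if its indirect utility function is convex on the open
`L∞`-ball of radius `ε` around `p`. -/
def epsValid (B : List ((Fin n → ℝ) × ℝ)) (p : Fin n → ℝ) (ε : ℝ) : Prop :=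
  ConvexOn ℝ {q : Fin n → ℝ | ‖q - p‖ < ε} (indirectUtility B)

open Classical in
/-- Sum of the weights of bids in `B` that are marginal on both `i` and `i'` at `p`. -/
def marginalWeight (B : List ((Fin n → ℝ) × ℝ)) (p : Fin n → ℝ) (i i' : Fin (n + 1)) : ℝ :=
  (B.map fun bw => if Demands bw.1 p i ∧ Demands bw.1 p i' then bw.2 else 0).sum


open Classical in
/-- The projection of value vector `b` with respect to price `p`: where `I` is the set of
goods demanded by `b` at `p`, subtract the indicator vector of `{0,…,n} ∖ I` if `0 ∈ I`,
and otherwise add the indicator vector of `I`. (The 0-th coordinate is unaffected in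
either case, so this is well-defined as an operation on `ℝ^n`.) -/
def project (b p : Fin n → ℝ) : Fin n → ℝ := fun k =>
  if (0 : Fin (n + 1)) ∈ demandedSet b p then
    b k - (if k.succ ∈ demandedSet b p then 0 else 1)
  else
    b k + (if k.succ ∈ demandedSet b p then 1 else 0)

/-!
The projection changes every surplus at `p` by a constant `c` on the demanded goods and by
`c - 1` on the others (`c = 0` if the reject good is demanded, `c = 1` otherwise, so that the
surplus `0` of the reject good is unchanged). Raising all surpluses by `c` is harmless, and
lowering the non-demanded ones by `δ ≥ 0` keeps them strictly below the maximum, so the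
demanded set is unchanged while the gap to the best non-demanded good grows by exactly `δ`.
-/

@[simp]
lemma surplus_zero (b p : Fin n → ℝ) : surplus b p 0 = 0 := by
  simp [surplus, extVec]

@[simp]
lemma surplus_succ (b p : Fin n → ℝ) (k : Fin n) : surplus b p k.succ = b k - p k := by
  simp [surplus, extVec]

lemma mem_demandedSet {b p : Fin n → ℝ} {i : Fin (n + 1)} :
    i ∈ demandedSet b p ↔ ∀ j, surplus b p j ≤ surplus b p i := by
  classical
  exact mem_filter.trans (and_iff_right (mem_univ i))

lemma demandedSet_nonempty (b p : Fin n → ℝ) : (demandedSet b p).Nonempty := by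
  obtain ⟨i, -, hi⟩ := exists_max_image univ (surplus b p) univ_nonempty
  exact ⟨i, mem_demandedSet.2 fun j => hi j (mem_univ j)⟩

lemma surplus_le_maxSurplus (b p : Fin n → ℝ) (j : Fin (n + 1)) :
    surplus b p j ≤ maxSurplus b p :=
  le_sup' _ (mem_univ j)

lemma maxSurplus_eq_of_mem_demandedSet {b p : Fin n → ℝ} {i : Fin (n + 1)}
    (hi : i ∈ demandedSet b p) : maxSurplus b p = surplus b p i :=
  le_antisymm (sup'_le _ _ fun j _ => mem_demandedSet.1 hi j) (surplus_le_maxSurplus b p i)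

lemma surplus_lt_maxSurplus_of_notMem_demandedSet {b p : Fin n → ℝ} {j : Fin (n + 1)}
    (hj : j ∉ demandedSet b p) : surplus b p j < maxSurplus b p := by
  obtain ⟨k, hk⟩ := not_forall.1 (mt mem_demandedSet.2 hj)
  exact (not_le.1 hk).trans_le (surplus_le_maxSurplus b p k)

def IsSurplusShift (b b' p : Fin n → ℝ) (c δ : ℝ) : Prop :=
  ∀ j, surplus b' p j = surplus b p j + c - if j ∈ demandedSet b p then 0 else δ

section IsSurplusShift

variable {b b' p : Fin n → ℝ} {c δ : ℝ}

lemma IsSurplusShift.demandedSet_eq (h : IsSurplusShift b b' p c δ) (hδ : 0 ≤ δ) :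
    demandedSet b' p = demandedSet b p := by
  obtain ⟨i₀, hi₀⟩ := demandedSet_nonempty b p
  ext i
  by_cases hi : i ∈ demandedSet b p
  · refine iff_of_true (mem_demandedSet.2 fun j => ?_) hi
    rw [h, h, if_pos hi, ← maxSurplus_eq_of_mem_demandedSet hi]
    split_ifs <;> linarith [surplus_le_maxSurplus b p j]
  · refine iff_of_false (fun hi' => ?_) hi
    have := mem_demandedSet.1 hi' i₀
    rw [h, h, if_pos hi₀, if_neg hi, ← maxSurplus_eq_of_mem_demandedSet hi₀] at this
    linarith [surplus_lt_maxSurplus_of_notMem_demandedSet hi]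

lemma IsSurplusShift.maxSurplus_eq (h : IsSurplusShift b b' p c δ) (hδ : 0 ≤ δ) :
    maxSurplus b' p = maxSurplus b p + c := by
  obtain ⟨i₀, hi₀⟩ := demandedSet_nonempty b p
  have hi₀' : i₀ ∈ demandedSet b' p := (h.demandedSet_eq hδ).symm ▸ hi₀
  rw [maxSurplus_eq_of_mem_demandedSet hi₀', h, if_pos hi₀,
    maxSurplus_eq_of_mem_demandedSet hi₀, sub_zero]

lemma IsSurplusShift.surplusGap_eq (h : IsSurplusShift b b' p c δ) (hδ : 0 ≤ δ)
    (hD : demandedSet b p ≠ univ) : surplusGap b' p = surplusGap b p + δ := by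
  set notDemanded := {i | i ∉ demandedSet b p}
  have hne : notDemanded.Nonempty := by
    obtain ⟨i, -, hi⟩ := exists_of_ssubset (ssubset_univ_iff.2 hD)
    exact ⟨i, hi⟩
  have himage : surplus b' p '' notDemanded =
      (· + (c - δ)) '' (surplus b p '' notDemanded) := by
    rw [Set.image_image]
    refine Set.image_congr fun i hi => ?_
    rw [h, if_neg hi]
    ring
  have hsSup :
      sSup (surplus b' p '' notDemanded) = sSup (surplus b p '' notDemanded) + (c - δ) := by
    rw [himage, ← Set.Finite.map_sSup_of_monotone (add_left_mono (a := c - δ))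
      (hne.image _) ((Set.toFinite notDemanded).image _)]
  unfold surplusGap
  rw [h.demandedSet_eq hδ, hsSup, h.maxSurplus_eq hδ]
  ring

end IsSurplusShift

lemma isSurplusShift_project (b p : Fin n → ℝ) :
    IsSurplusShift b (project b p) p (if 0 ∈ demandedSet b p then 0 else 1) 1 := by
  intro j
  cases j using Fin.cases with
  | zero => split_ifs <;> simp
  | succ k => simp only [surplus_succ, project]; split_ifs <;> ring

lemma project_eq_self_of_demandedSet_eq_univ {b p : Fin n → ℝ} (h : demandedSet b p = univ) :
    project b p = b := by
  ext k
  simp [project, h]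

theorem stmt5_general (n : ℕ) (b : Fin n → ℝ)
    (p : Fin n → ℝ) :
    (demandedSet b p = Finset.univ → project b p = b) ∧
    (demandedSet b p ≠ Finset.univ →
      demandedSet (project b p) p = demandedSet b p ∧
      surplusGap (project b p) p = surplusGap b p + 1) :=
  ⟨project_eq_self_of_demandedSet_eq_univ, fun hD =>
    ⟨(isSurplusShift_project b p).demandedSet_eq zero_le_one,
      (isSurplusShift_project b p).surplusGap_eq zero_le_one hD⟩⟩

/-- Let `I` be the set of goods demanded by the bid `(b,w)` at `p` and let
`b'` be the projection of `b` with respect to `p`. If `I = {0,…,n}` then `b' = b`; otherwise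
the set of goods demanded by `(b',w)` at `p` is again `I`, and the surplus gap of `(b',w)`
at `p` equals the surplus gap of `(b,w)` at `p` plus 1. -/
theorem stmt5 (n : ℕ) (hn : 1 ≤ n) (b : Fin n → ℝ) (w : ℝ) (hw : w = 1 ∨ w = -1)
    (p : Fin n → ℝ) :
    (demandedSet b p = Finset.univ → project b p = b) ∧
    (demandedSet b p ≠ Finset.univ →
      demandedSet (project b p) p = demandedSet b p ∧
      surplusGap (project b p) p = surplusGap b p + 1) :=
  stmt5_general n b p

end
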